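/- With v_1, v_2, v_3 defined by the recursive Mex algorithm, for every n ≥ 0 one has v_1(n) - 2v_2(n) + v_3(n) ∈ {0, -1, -2}; equivalently, 0 ≤ 2v_2(n) - v_1(n) - v_3(n) ≤ 2. -/

import Mathlib

/-- Minimum excluded value of a set of natural numbers. -/
noncomputable def mex (S : Set ℕ) : ℕ := sInf {m : ℕ | m ∉ S}

/-- Coordinates of a set of triples. -/
def coords (G : Set (ℕ × ℕ × ℕ)) : Set ℕ :=
  {k | ∃ x ∈ G, k = x.1 ∨ k = x.2.1 ∨ k = x.2.2}

/-- Pairwise coordinate differences of a set of triples. -/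
def diffs (G : Set (ℕ × ℕ × ℕ)) : Set ℕ :=
  {d | ∃ x ∈ G, d = x.2.1 - x.1 ∨ d = x.2.2 - x.2.1 ∨ d = x.2.2 - x.1}

/-- One step of the Mex algorithm: the next P-position. -/
noncomputable def step (G : Set (ℕ × ℕ × ℕ)) : ℕ × ℕ × ℕ :=
  let F := coords G
  let D := diffs G
  let a := mex F
  let b := mex ((fun d => a + d) '' D ∪ Set.Icc 1 a ∪ F)
  let c := mex ((fun d => b + d) '' D ∪ Set.Icc 1 b ∪ F)
  (a, b, c)

/-- The sets `G_n` of P-positions computed by the Mex algorithm. -/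
noncomputable def Gset : ℕ → Set (ℕ × ℕ × ℕ)
  | 0 => {(0, 0, 0)}
  | n + 1 => Gset n ∪ {step (Gset n)}

/-- The `n`-th P-position `(v_1(n), v_2(n), v_3(n))`. -/
noncomputable def v : ℕ → ℕ × ℕ × ℕ
  | 0 => (0, 0, 0)
  | n + 1 => step (Gset n)

noncomputable def v1 (n : ℕ) : ℕ := (v n).1
noncomputable def v2 (n : ℕ) : ℕ := (v n).2.1
noncomputable def v3 (n : ℕ) : ℕ := (v n).2.2

/-- `F_n`: the set of coordinates of elements of `G_n`. -/
noncomputable def Fset (n : ℕ) : Set ℕ := coords (Gset n)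

/-- `D_n`: the set of pairwise coordinate differences over `G_n`. -/
noncomputable def Dset (n : ℕ) : Set ℕ := diffs (Gset n)

/-!
Write `a n, b n, c n` for `v1 (n + 1), v2 (n + 1), v3 (n + 1)` and `e n` for `mex (Dset n)`.
By strong induction on `n` one shows `a + e ≤ b ≤ a + e + 2`, `c = b + e` and
`b - a < e (n + 1)`. The last two facts make the third coordinates `c i` increase in steps of at
least `3` and the spans `c i - a i` in steps of at least `2`. Every coordinate in `F_n` that is at
least `a + e` is some `c i`, and every difference in `D_n` that is at least `e` is some span. So if
`b > a + e + 2`, then `a + e`, `a + e + 1`, `a + e + 2` are all excluded; `a + e` must be a third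
coordinate, hence the other two are not, so `e + 1` and `e + 2` are both spans, which is
impossible.
-/

section Mex

variable {S S' : Set ℕ} {k t : ℕ}

lemma mex_notMem (hS : S.Finite) : mex S ∉ S :=
  Nat.sInf_mem hS.infinite_compl.nonempty

lemma mem_of_lt_mex (h : k < mex S) : k ∈ S :=
  not_not.mp (Nat.notMem_of_lt_sInf h)

lemma mex_le_of_notMem (h : k ∉ S) : mex S ≤ k :=
  Nat.sInf_le h

lemma le_mex_of_forall_lt_mem (hS : S.Finite) (h : ∀ m < t, m ∈ S) : t ≤ mex S :=
  not_lt.mp fun hlt => mex_notMem hS (h _ hlt)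

lemma mex_mono (hS' : S'.Finite) (h : S ⊆ S') : mex S ≤ mex S' :=
  le_mex_of_forall_lt_mem hS' fun _ hm => h (mem_of_lt_mex hm)

lemma mex_lt_mex (hS' : S'.Finite) (h : S ⊆ S') (hmem : mex S ∈ S') : mex S < mex S' :=
  (mex_mono hS' h).lt_of_ne fun heq => mex_notMem hS' (heq ▸ hmem)

lemma one_le_mex (hS : S.Finite) (h : 0 ∈ S) : 1 ≤ mex S :=
  le_mex_of_forall_lt_mem hS fun m hm => by rwa [Nat.lt_one_iff.mp hm]

end Mex

/-- The set whose mex is the coordinate chosen after `x`. -/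
def excluded (x : ℕ) (D F : Set ℕ) : Set ℕ :=
  (fun d => x + d) '' D ∪ Set.Icc 1 x ∪ F

section Excluded

variable {x m : ℕ} {D F : Set ℕ}

lemma mem_excluded :
    m ∈ excluded x D F ↔ (∃ d ∈ D, x + d = m) ∨ (1 ≤ m ∧ m ≤ x) ∨ m ∈ F := by
  simp [excluded, or_assoc]

lemma excluded_finite (hD : D.Finite) (hF : F.Finite) : (excluded x D F).Finite :=
  ((hD.image _).union (Set.finite_Icc 1 x)).union hF

lemma add_mex_le_mex_excluded (hD : D.Finite) (hF : F.Finite) (h0 : 0 ∈ F) :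
    x + mex D ≤ mex (excluded x D F) := by
  refine le_mex_of_forall_lt_mem (excluded_finite hD hF) fun m hm => mem_excluded.mpr ?_
  rcases Nat.lt_or_ge x m with hxm | hmx
  · exact Or.inl ⟨m - x, mem_of_lt_mex (by omega), by omega⟩
  · rcases Nat.eq_zero_or_pos m with rfl | hpos
    exacts [Or.inr (Or.inr h0), Or.inr (Or.inl ⟨hpos, hmx⟩)]

lemma mex_excluded_eq (hD : D.Finite) (hF : F.Finite) (h0D : 0 ∈ D) (h0F : 0 ∈ F)
    (h : x + mex D ∉ F) : mex (excluded x D F) = x + mex D := by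
  refine le_antisymm (mex_le_of_notMem fun hmem => ?_) (add_mex_le_mex_excluded hD hF h0F)
  have h1 := one_le_mex hD h0D
  rcases mem_excluded.mp hmem with ⟨d, hd, hdx⟩ | hIcc | hF'
  · exact mex_notMem hD (by rwa [show d = mex D by omega] at hd)
  · omega
  · exact h hF'

lemma mem_or_sub_mem_of_lt_mex_excluded (hxm : x < m) (hm : m < mex (excluded x D F)) :
    m ∈ F ∨ m - x ∈ D := by
  rcases mem_excluded.mp (mem_of_lt_mex hm) with ⟨d, hd, rfl⟩ | hIcc | hF
  · exact Or.inr (by rwa [Nat.add_sub_cancel_left])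
  · omega
  · exact Or.inl hF

end Excluded

section Coords

variable {G G' : Set (ℕ × ℕ × ℕ)}

lemma coords_mono (h : G ⊆ G') : coords G ⊆ coords G' :=
  fun _ ⟨x, hx, hk⟩ => ⟨x, h hx, hk⟩

lemma diffs_mono (h : G ⊆ G') : diffs G ⊆ diffs G' :=
  fun _ ⟨x, hx, hk⟩ => ⟨x, h hx, hk⟩

lemma coords_finite (hG : G.Finite) : (coords G).Finite := by
  refine (hG.biUnion fun x _ => Set.toFinite {x.1, x.2.1, x.2.2}).subset ?_
  rintro k ⟨x, hx, hk⟩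
  exact Set.mem_biUnion hx (by simpa using hk)

lemma diffs_finite (hG : G.Finite) : (diffs G).Finite := by
  refine (hG.biUnion fun x _ =>
    Set.toFinite {x.2.1 - x.1, x.2.2 - x.2.1, x.2.2 - x.1}).subset ?_
  rintro d ⟨x, hx, hd⟩
  exact Set.mem_biUnion hx (by simpa using hd)

end Coords

lemma mem_Gset_iff {p : ℕ × ℕ × ℕ} {n : ℕ} :
    p ∈ Gset n ↔ p = (0, 0, 0) ∨ ∃ i < n, p = v (i + 1) := by
  induction n with
  | zero => simp [Gset]
  | succ n ih =>
    simp only [Gset, Set.mem_union, Set.mem_singleton_iff, ih, Nat.exists_lt_succ_right, or_assoc, v]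

lemma Gset_finite (n : ℕ) : (Gset n).Finite := by
  induction n with
  | zero => exact Set.finite_singleton _
  | succ n ih => exact ih.union (Set.finite_singleton _)

lemma Gset_mono {m n : ℕ} (h : m ≤ n) : Gset m ⊆ Gset n := by
  induction h with
  | refl => exact le_rfl
  | step _ ih => exact ih.trans Set.subset_union_left

lemma Fset_finite (n : ℕ) : (Fset n).Finite := coords_finite (Gset_finite n)

lemma Dset_finite (n : ℕ) : (Dset n).Finite := diffs_finite (Gset_finite n)

lemma mem_Fset_iff {k n : ℕ} :
    k ∈ Fset n ↔ k = 0 ∨ ∃ i < n, k = v1 (i + 1) ∨ k = v2 (i + 1) ∨ k = v3 (i + 1) := by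
  simp [Fset, coords, mem_Gset_iff, v1, v2, v3]

lemma mem_Dset_iff {d n : ℕ} :
    d ∈ Dset n ↔ d = 0 ∨ ∃ i < n, d = v2 (i + 1) - v1 (i + 1) ∨
      d = v3 (i + 1) - v2 (i + 1) ∨ d = v3 (i + 1) - v1 (i + 1) := by
  simp [Dset, diffs, mem_Gset_iff, v1, v2, v3]

lemma zero_mem_Fset (n : ℕ) : 0 ∈ Fset n := mem_Fset_iff.mpr (Or.inl rfl)

lemma zero_mem_Dset (n : ℕ) : 0 ∈ Dset n := mem_Dset_iff.mpr (Or.inl rfl)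

lemma Dset_mono {m n : ℕ} (h : m ≤ n) : Dset m ⊆ Dset n := diffs_mono (Gset_mono h)

lemma v1_succ_lt_v1_succ {i n : ℕ} (h : i < n) : v1 (i + 1) < v1 (n + 1) :=
  mex_lt_mex (Fset_finite n) (coords_mono (Gset_mono h.le))
    (mem_Fset_iff.mpr (Or.inr ⟨i, h, Or.inl rfl⟩))

noncomputable def mexD (n : ℕ) : ℕ := mex (Dset n)

lemma one_le_mexD (n : ℕ) : 1 ≤ mexD n := one_le_mex (Dset_finite n) (zero_mem_Dset n)

lemma mexD_mono {m n : ℕ} (h : m ≤ n) : mexD m ≤ mexD n :=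
  mex_mono (Dset_finite n) (Dset_mono h)

lemma v1_add_mexD_le_v2 (n : ℕ) : v1 (n + 1) + mexD n ≤ v2 (n + 1) :=
  add_mex_le_mex_excluded (Dset_finite n) (Fset_finite n) (zero_mem_Fset n)

structure StepInvariant (n : ℕ) : Prop where
  v2_le : v2 (n + 1) ≤ v1 (n + 1) + mexD n + 2
  v3_eq : v3 (n + 1) = v2 (n + 1) + mexD n
  v2_lt : v2 (n + 1) < v1 (n + 1) + mexD (n + 1)

namespace StepInvariant

variable {i j n : ℕ}

lemma mexD_lt (h : StepInvariant i) (hi : i < n) : mexD i < mexD n := by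
  have := v1_add_mexD_le_v2 i
  have := h.v2_lt
  have := mexD_mono (m := i + 1) hi
  omega

lemma v2_lt_v1_add_mexD (h : StepInvariant i) (hi : i < n) :
    v2 (i + 1) < v1 (n + 1) + mexD n := by
  have := h.v2_lt
  have := mexD_mono (m := i + 1) hi
  have := v1_succ_lt_v1_succ hi
  omega

lemma v3_add_three_le (hi : StepInvariant i) (hj : StepInvariant j) (hij : i < j) :
    v3 (i + 1) + 3 ≤ v3 (j + 1) := by
  have := hi.v2_lt
  have := mexD_mono (m := i + 1) hij
  have := v1_succ_lt_v1_succ hij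
  have := hi.mexD_lt hij
  have := hi.v3_eq
  have := hj.v3_eq
  have := v1_add_mexD_le_v2 j
  omega

lemma span_add_two_le (hi : StepInvariant i) (hj : StepInvariant j) (hij : i < j) :
    v3 (i + 1) - v1 (i + 1) + 2 ≤ v3 (j + 1) - v1 (j + 1) := by
  have := hi.v2_lt
  have := mexD_mono (m := i + 1) hij
  have := hi.mexD_lt hij
  have := hi.v3_eq
  have := hj.v3_eq
  have := v1_add_mexD_le_v2 i
  have := v1_add_mexD_le_v2 j
  omega

end StepInvariant

lemma eq_zero_of_add_eq_of_gap_le {f : ℕ → ℕ} {n k i j x : ℕ}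
    (hgap : ∀ i < n, ∀ j < n, i < j → f i + k ≤ f j) (hi : i < n) (hj : j < n) (hx : x < k)
    (h : f i + x = f j) : x = 0 := by
  rcases lt_trichotomy i j with hij | rfl | hji
  · have := hgap i hi j hj hij
    omega
  · omega
  · have := hgap j hj i hi hji
    omega

section Induction

variable {n : ℕ}

lemma lt_of_mem_Fset (ih : ∀ i < n, StepInvariant i) {k : ℕ} (hk : k ∈ Fset n) :
    k < v1 (n + 1) + 2 * mexD n := by
  rcases mem_Fset_iff.mp hk with rfl | ⟨i, hi, hk⟩
  · have := one_le_mexD n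
    omega
  · have := (ih i hi).v2_lt_v1_add_mexD hi
    have := (ih i hi).mexD_lt hi
    have := (ih i hi).v3_eq
    have := v1_succ_lt_v1_succ hi
    omega

lemma exists_v3_eq_of_mem_Fset (ih : ∀ i < n, StepInvariant i) {k : ℕ} (hk : k ∈ Fset n)
    (h : v1 (n + 1) + mexD n ≤ k) : ∃ i < n, k = v3 (i + 1) := by
  rcases mem_Fset_iff.mp hk with rfl | ⟨i, hi, hk⟩
  · have := one_le_mexD n
    omega
  · have := (ih i hi).v2_lt_v1_add_mexD hi
    have := v1_succ_lt_v1_succ hi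
    exact ⟨i, hi, by omega⟩

lemma exists_span_eq_of_mem_Dset (ih : ∀ i < n, StepInvariant i) {d : ℕ} (hd : d ∈ Dset n)
    (h : mexD n ≤ d) : ∃ i < n, d = v3 (i + 1) - v1 (i + 1) := by
  rcases mem_Dset_iff.mp hd with rfl | ⟨i, hi, hd⟩
  · have := one_le_mexD n
    omega
  · have := (ih i hi).v2_lt
    have := mexD_mono (m := i + 1) hi
    have := (ih i hi).mexD_lt hi
    have := (ih i hi).v3_eq
    exact ⟨i, hi, by omega⟩

lemma mem_Fset_or_sub_mem_Dset {m : ℕ} (h1 : v1 (n + 1) < m) (h2 : m < v2 (n + 1)) :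
    m ∈ Fset n ∨ m - v1 (n + 1) ∈ Dset n :=
  mem_or_sub_mem_of_lt_mex_excluded h1 h2

/-- `a + e` is excluded, and not by `D_n`, so it is a third coordinate; the gaps between third
coordinates then leave `a + e + j` to be excluded by `D_n` alone. -/
lemma mexD_add_mem_Dset (ih : ∀ i < n, StepInvariant i) {j : ℕ} (hj : 0 < j) (hj2 : j < 3)
    (h : v1 (n + 1) + mexD n + j < v2 (n + 1)) : mexD n + j ∈ Dset n := by
  have he := one_le_mexD n
  have hae : v1 (n + 1) + mexD n ∈ Fset n := by
    refine (mem_Fset_or_sub_mem_Dset (by omega) (by omega)).resolve_right ?_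
    rw [Nat.add_sub_cancel_left]
    exact mex_notMem (Dset_finite n)
  rcases mem_Fset_or_sub_mem_Dset (by omega) h with hF | hD
  · obtain ⟨i, hi, hci⟩ := exists_v3_eq_of_mem_Fset ih hae le_rfl
    obtain ⟨i', hi', hci'⟩ := exists_v3_eq_of_mem_Fset ih hF (by omega)
    have := eq_zero_of_add_eq_of_gap_le (f := fun i => v3 (i + 1))
      (fun i hi j hj hij => (ih i hi).v3_add_three_le (ih j hj) hij) hi hi' hj2 (by omega)
    omega
  · rwa [add_assoc, Nat.add_sub_cancel_left] at hD

lemma v2_succ_le (ih : ∀ i < n, StepInvariant i) : v2 (n + 1) ≤ v1 (n + 1) + mexD n + 2 := by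
  by_contra! hb
  obtain ⟨p, hp, hsp⟩ :=
    exists_span_eq_of_mem_Dset ih (mexD_add_mem_Dset ih one_pos (by norm_num) (by omega)) (by omega)
  obtain ⟨q, hq, hsq⟩ :=
    exists_span_eq_of_mem_Dset ih (mexD_add_mem_Dset ih two_pos (by norm_num) hb) (by omega)
  exact one_ne_zero <| eq_zero_of_add_eq_of_gap_le (f := fun i => v3 (i + 1) - v1 (i + 1))
    (fun i hi j hj hij => (ih i hi).span_add_two_le (ih j hj) hij) hp hq one_lt_two (by omega)

lemma v3_succ_eq (ih : ∀ i < n, StepInvariant i) : v3 (n + 1) = v2 (n + 1) + mexD n := by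
  have hnotMem : v2 (n + 1) + mexD n ∉ Fset n := fun hmem => by
    have := lt_of_mem_Fset ih hmem
    have := v1_add_mexD_le_v2 n
    omega
  exact mex_excluded_eq (Dset_finite n) (Fset_finite n) (zero_mem_Dset n) (zero_mem_Fset n) hnotMem

lemma v2_succ_lt (ih : ∀ i < n, StepInvariant i) : v2 (n + 1) < v1 (n + 1) + mexD (n + 1) := by
  have hv2 := v2_succ_le ih
  have hv3 := v3_succ_eq ih
  have hlow := v1_add_mexD_le_v2 n
  have hnew : ∀ d, d = v2 (n + 1) - v1 (n + 1) ∨ d = v3 (n + 1) - v2 (n + 1) →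
      d ∈ Dset (n + 1) := fun d hd => mem_Dset_iff.mpr (Or.inr ⟨n, n.lt_succ_self, by omega⟩)
  have hsub : ∀ m < v2 (n + 1) - v1 (n + 1) + 1, m ∈ Dset (n + 1) := by
    intro m hm
    rcases lt_or_ge m (mexD n) with hlt | hge
    · exact Dset_mono n.le_succ (mem_of_lt_mex hlt)
    by_cases hm' : m = mexD n ∨ m = v2 (n + 1) - v1 (n + 1)
    · exact hnew m (by omega)
    · obtain rfl : m = mexD n + 1 := by omega
      exact Dset_mono n.le_succ (mexD_add_mem_Dset ih one_pos (by norm_num) (by omega))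
  have : v2 (n + 1) - v1 (n + 1) + 1 ≤ mexD (n + 1) :=
    le_mex_of_forall_lt_mem (Dset_finite (n + 1)) hsub
  omega

lemma stepInvariant (n : ℕ) : StepInvariant n := by
  induction n using Nat.strong_induction_on with
  | _ n ih => exact ⟨v2_succ_le ih, v3_succ_eq ih, v2_succ_lt ih⟩

end Induction

theorem stmt9 : ∀ n : ℕ,
    (v1 n : ℤ) - 2 * v2 n + v3 n ∈ ({0, -1, -2} : Set ℤ) := by
  rintro (_ | n)
  · simp [v1, v2, v3, v]
  · have hlow := v1_add_mexD_le_v2 n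
    have ⟨hup, hv3, _⟩ := stepInvariant n
    simp only [Set.mem_insert_iff, Set.mem_singleton_iff]
    omega
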